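/- Let β, γ > 0, r₀ = β/γ, and let S, I be differentiable functions with S > 0 everywhere, satisfying S' = -βSI and I' = βSI - γI. For any t₁, t₂ with I(t₂) + S(t₂) ≠ I(t₁) + S(t₁), one has r₀ = log(S(t₂)/S(t₁)) / (I(t₂) + S(t₂) - I(t₁) - S(t₁)). -/

import Mathlib

/-- `β` times the conserved quantity `I + S - (1 / r₀) log S`, scaled so that no division occurs. -/
noncomputable def sirInvariant (β γ : ℝ) (S I : ℝ → ℝ) (t : ℝ) : ℝ :=
  β * (I t + S t) - γ * Real.log (S t)

theorem hasDerivAt_sirInvariant {β γ : ℝ} {S I : ℝ → ℝ} {t : ℝ} (hS0 : S t ≠ 0)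
    (hS : HasDerivAt S (-β * S t * I t) t) (hI : HasDerivAt I (β * S t * I t - γ * I t) t) :
    HasDerivAt (sirInvariant β γ S I) 0 t := by
  have hlog : HasDerivAt (fun t => Real.log (S t)) (-β * S t * I t / S t) t := hS.log hS0
  refine (((hI.add hS).const_mul β).sub (hlog.const_mul γ)).congr_deriv ?_
  field_simp
  ring

theorem sirInvariant_eq {β γ : ℝ} {S I : ℝ → ℝ} (hS0 : ∀ t, S t ≠ 0)
    (hS : ∀ t, HasDerivAt S (-β * S t * I t) t)
    (hI : ∀ t, HasDerivAt I (β * S t * I t - γ * I t) t) (t₁ t₂ : ℝ) :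
    sirInvariant β γ S I t₂ = sirInvariant β γ S I t₁ := by
  have hderiv t := hasDerivAt_sirInvariant (hS0 t) (hS t) (hI t)
  exact is_const_of_deriv_eq_zero (fun t => (hderiv t).differentiableAt)
    (fun t => (hderiv t).deriv) t₂ t₁

theorem stmt4_general (β γ r₀ : ℝ) (hγ : 0 < γ) (hr : r₀ = β / γ)
    (S I : ℝ → ℝ) (hSpos : ∀ t, 0 < S t)
    (hS : ∀ t, HasDerivAt S (-β * S t * I t) t)
    (hI : ∀ t, HasDerivAt I (β * S t * I t - γ * I t) t)
    (t₁ t₂ : ℝ) (hne : I t₂ + S t₂ ≠ I t₁ + S t₁) :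
    r₀ = Real.log (S t₂ / S t₁) / (I t₂ + S t₂ - I t₁ - S t₁) := by
  have hS0 t : S t ≠ 0 := (hSpos t).ne'
  have hconst := sirInvariant_eq hS0 hS hI t₁ t₂
  have hΔ : I t₂ + S t₂ - I t₁ - S t₁ ≠ 0 := fun h => hne (by linarith)
  rw [hr, Real.log_div (hS0 t₂) (hS0 t₁), div_eq_div_iff hγ.ne' hΔ]
  unfold sirInvariant at hconst
  linarith

theorem stmt4 (β γ r₀ : ℝ) (hβ : 0 < β) (hγ : 0 < γ) (hr : r₀ = β / γ)
    (S I : ℝ → ℝ) (hSpos : ∀ t, 0 < S t)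
    (hS : ∀ t, HasDerivAt S (-β * S t * I t) t)
    (hI : ∀ t, HasDerivAt I (β * S t * I t - γ * I t) t)
    (t₁ t₂ : ℝ) (hne : I t₂ + S t₂ ≠ I t₁ + S t₁) :
    r₀ = Real.log (S t₂ / S t₁) / (I t₂ + S t₂ - I t₁ - S t₁) :=
  stmt4_general β γ r₀ hγ hr S I hSpos hS hI t₁ t₂ hne
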